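/- Let V ∈ C([−1,1]) be complex-valued. Then there exists a constant C > 0 (depending only on sup_{x∈[−1,1]}|V(x)|) such that for all λ ∈ ℂ∖{0} with Re λ ≥ −1/4 and all 0 ≤ y ≤ x < 1 one has |K(y,x,λ)| ≤ C (1−x)^{−1/4} |λ|^{−1}. -/

import Mathlib

open MeasureTheory Set ENNReal

/-- The Volterra kernel
`K(y,x,λ) = (2λ)⁻¹ [1 − ((1−y)/(1+y))^{−λ} ((1−x)/(1+x))^{λ}] V(x)`. -/
noncomputable def Kker (V : ℝ → ℂ) (lam : ℂ) (y x : ℝ) : ℂ :=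
  (2 * lam)⁻¹ * (1 - (((1 - y)/(1 + y) : ℝ) : ℂ) ^ (-lam) *
    (((1 - x)/(1 + x) : ℝ) : ℂ) ^ lam) * V x

/-!
Write `t = (1-x)/(1+x)` and `s = (1-y)/(1+y)`, so that `0 < t ≤ s ≤ 1` for `0 ≤ y ≤ x < 1`.
The power product in the kernel has modulus `(t/s)^{Re λ}`, and since `t ≤ t/s ≤ 1` and
`Re λ ≥ -1/4` this is at most `t^{-1/4} ≤ 2^{1/4} (1-x)^{-1/4}`. Together with
`1 ≤ (1-x)^{-1/4}` and `|V| ≤ M` on `[-1,1]`, this gives the bound with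
`C = (1 + 2^{1/4}) M / 2`.
-/

lemma norm_ofReal_cpow_neg_mul_cpow_le {s t e : ℝ} {z : ℂ} (ht : 0 < t) (hts : t ≤ s)
    (hs : s ≤ 1) (he : e ≤ 0) (hez : e ≤ z.re) :
    ‖(s : ℂ) ^ (-z) * (t : ℂ) ^ z‖ ≤ t ^ e := by
  have hs₀ : 0 < s := ht.trans_le hts
  have hnorm : ‖(s : ℂ) ^ (-z) * (t : ℂ) ^ z‖ = (t / s) ^ z.re := by
    rw [norm_mul, Complex.norm_cpow_eq_rpow_re_of_pos hs₀,
      Complex.norm_cpow_eq_rpow_re_of_pos ht, Complex.neg_re, Real.rpow_neg hs₀.le,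
      Real.div_rpow ht.le hs₀.le, inv_mul_eq_div]
  have hts₁ : t / s ≤ 1 := (div_le_one hs₀).2 hts
  have ht_le : t ≤ t / s := le_div_self ht.le hs₀ hs
  calc ‖(s : ℂ) ^ (-z) * (t : ℂ) ^ z‖ = (t / s) ^ z.re := hnorm
    _ ≤ (t / s) ^ e := Real.rpow_le_rpow_of_exponent_ge (div_pos ht hs₀) hts₁ hez
    _ ≤ t ^ e := Real.rpow_le_rpow_of_nonpos ht ht_le he

lemma one_sub_div_one_add_le_of_le {x y : ℝ} (hy : -1 < y) (hyx : y ≤ x) :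
    (1 - x) / (1 + x) ≤ (1 - y) / (1 + y) := by
  rw [div_le_div_iff₀ (by linarith) (by linarith)]
  nlinarith

lemma rpow_one_sub_div_one_add_le {x e : ℝ} (hx₀ : -1 < x) (hx₁ : x < 1) (he : e ≤ 0) :
    ((1 - x) / (1 + x)) ^ e ≤ 2 ^ (-e) * (1 - x) ^ e := by
  have hhalf : (1 - x) / 2 ≤ (1 - x) / (1 + x) :=
    div_le_div_of_nonneg_left (by linarith) (by linarith) (by linarith)
  calc ((1 - x) / (1 + x)) ^ e ≤ ((1 - x) / 2) ^ e :=
        Real.rpow_le_rpow_of_nonpos (by linarith) hhalf he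
    _ = 2 ^ (-e) * (1 - x) ^ e := by
        rw [Real.div_rpow (by linarith) zero_le_two, Real.rpow_neg zero_le_two, div_eq_mul_inv,
          mul_comm]

lemma norm_one_sub_cpow_mul_cpow_le {x y e : ℝ} {z : ℂ} (hy : 0 ≤ y) (hyx : y ≤ x)
    (hx : x < 1) (he : e ≤ 0) (hez : e ≤ z.re) :
    ‖1 - (((1 - y) / (1 + y) : ℝ) : ℂ) ^ (-z) * (((1 - x) / (1 + x) : ℝ) : ℂ) ^ z‖
      ≤ (1 + 2 ^ (-e)) * (1 - x) ^ e := by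
  have ht : 0 < (1 - x) / (1 + x) := div_pos (by linarith) (by linarith)
  have hs : (1 - y) / (1 + y) ≤ 1 := by
    simpa using one_sub_div_one_add_le_of_le (x := y) (y := 0) (by norm_num) hy
  have hpow : ‖(((1 - y) / (1 + y) : ℝ) : ℂ) ^ (-z) * (((1 - x) / (1 + x) : ℝ) : ℂ) ^ z‖
      ≤ 2 ^ (-e) * (1 - x) ^ e :=
    (norm_ofReal_cpow_neg_mul_cpow_le ht (one_sub_div_one_add_le_of_le (by linarith) hyx) hs
      he hez).trans (rpow_one_sub_div_one_add_le (by linarith) hx he)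
  have hone : 1 ≤ (1 - x) ^ e := Real.one_le_rpow_of_pos_of_le_one_of_nonpos
    (by linarith) (by linarith) he
  calc _ ≤ ‖(1 : ℂ)‖ + ‖(((1 - y) / (1 + y) : ℝ) : ℂ) ^ (-z) *
        (((1 - x) / (1 + x) : ℝ) : ℂ) ^ z‖ := norm_sub_le _ _
    _ ≤ (1 - x) ^ e + 2 ^ (-e) * (1 - x) ^ e := by rw [norm_one]; exact add_le_add hone hpow
    _ = (1 + 2 ^ (-e)) * (1 - x) ^ e := by ring

/-- Kernel bound for large `λ` (from the proof of Proposition `prop:v1`): there is a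
constant `C > 0`, depending only on `sup |V|`, such that
`|K(y,x,λ)| ≤ C (1−x)^{−1/4} |λ|⁻¹` for all `λ ≠ 0` with `Re λ ≥ −1/4` and
`0 ≤ y ≤ x < 1`. -/
theorem stmt16 (V : ℝ → ℂ) (hV : ContinuousOn V (Icc (-1:ℝ) 1)) :
    ∃ C : ℝ, 0 < C ∧ ∀ lam : ℂ, lam ≠ 0 → -(1/4) ≤ lam.re →
      ∀ y x : ℝ, 0 ≤ y → y ≤ x → x < 1 →
        ‖Kker V lam y x‖ ≤ C * (1 - x) ^ (-(1/4) : ℝ) * ‖lam‖⁻¹ := by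
  obtain ⟨M, hM⟩ := isCompact_Icc.exists_bound_of_continuousOn hV
  set M' := max M 1
  refine ⟨(1 + 2 ^ (-(-(1/4)) : ℝ)) * M' / 2, by positivity, ?_⟩
  intro lam _ hre y x hy hyx hx
  have hVx : ‖V x‖ ≤ M' := (hM x ⟨by linarith, hx.le⟩).trans (le_max_left _ _)
  have hfactor := norm_one_sub_cpow_mul_cpow_le hy hyx hx (by norm_num) hre
  calc ‖Kker V lam y x‖
      = ‖lam‖⁻¹ / 2 * ‖1 - (((1 - y) / (1 + y) : ℝ) : ℂ) ^ (-lam) *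
          (((1 - x) / (1 + x) : ℝ) : ℂ) ^ lam‖ * ‖V x‖ := by
        simp only [Kker, norm_mul, norm_inv, Complex.norm_ofNat]; ring
    _ ≤ ‖lam‖⁻¹ / 2 * ((1 + 2 ^ (-(-(1/4)) : ℝ)) * (1 - x) ^ (-(1/4) : ℝ)) * M' := by
        gcongr
    _ = _ := by ring
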